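/- Assume Gaussian noise. For any fixed L < 1, any q > 0, any n large enough, and any θ ∈ Θ_0 (constant signal), the penalized least-squares estimator τ̂ minimizing Cr_0(Y,·) satisfies P_θ( |τ̂| ≥ 1 ) ≥ 1 − n^{−1}, i.e. with probability at least 1 − 1/n at least one spurious change-point is selected. -/

import Mathlib

open MeasureTheory ProbabilityTheory Finset Real

/-- independent centered 1-sub-Gaussian noise hypotheses. -/
def IsStdSubGaussian {Ω : Type} [MeasurableSpace Ω] (P : Measure Ω) (ε : ℕ → Ω → ℝ) : Prop :=
  (∀ i, Measurable (ε i)) ∧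
  iIndepFun ε P ∧
  (∀ i, ∫ ω, ε i ω ∂P = 0) ∧
  (∀ i (t : ℝ), Integrable (fun ω => Real.exp (t * ε i ω)) P) ∧
  (∀ i (t : ℝ), ∫ ω, Real.exp (t * ε i ω) ∂P ≤ Real.exp (t ^ 2 / 2))

/-- Mean of `Y` over the integer interval `[a, b)`. -/
noncomputable def segMean (Y : ℕ → ℝ) (a b : ℕ) : ℝ :=
  (∑ i ∈ Finset.Ico a b, Y i) / ((b : ℝ) - (a : ℝ))

/-- CUSUM statistic of `Y` at the triad `(t₁, t₂, t₃)`. -/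
noncomputable def cusum (Y : ℕ → ℝ) (t₁ t₂ t₃ : ℕ) : ℝ :=
  (segMean Y t₂ t₃ - segMean Y t₁ t₂) *
    Real.sqrt ((((t₂ : ℝ) - t₁) * ((t₃ : ℝ) - t₂)) / ((t₃ : ℝ) - t₁))

/-- Largest boundary point (element of `S ∪ {1}`) which is `≤ i`. -/
def prevPt (S : Finset ℕ) (i : ℕ) : ℕ :=
  if h : ((insert 1 S).filter (fun s => s ≤ i)).Nonempty
  then ((insert 1 S).filter (fun s => s ≤ i)).max' h else 1

/-- Smallest boundary point (element of `S ∪ {n+1}`) which is `> i`. -/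
def nextPt (n : ℕ) (S : Finset ℕ) (i : ℕ) : ℕ :=
  if h : ((insert (n + 1) S).filter (fun s => i < s)).Nonempty
  then ((insert (n + 1) S).filter (fun s => i < s)).min' h else n + 1

/-- Orthogonal projection of `Y` onto vectors that are constant on each segment determined by
the change-point set `S ⊆ {2,…,n}` (the value at `i` is the mean of `Y` on the segment
containing `i`). -/
noncomputable def projCP (n : ℕ) (S : Finset ℕ) (Y : ℕ → ℝ) (i : ℕ) : ℝ :=
  segMean Y (prevPt S i) (nextPt n S i)

/-- i.i.d. standard Gaussian noise hypotheses. -/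
def IsStdGaussianNoise {Ω : Type} [MeasurableSpace Ω] (P : Measure Ω) (ε : ℕ → Ω → ℝ) : Prop :=
  (∀ i, Measurable (ε i)) ∧
  iIndepFun ε P ∧
  (∀ i, P.map (ε i) = gaussianReal 0 1)

/-- The multiscale penalty `pen₀(τ, q)`. -/
noncomputable def pen0 (n : ℕ) (q : ℝ) (S : Finset ℕ) : ℝ :=
  q * S.card + 2 * ∑ s ∈ insert 1 S, Real.log ((n : ℝ) / ((nextPt n S s : ℝ) - (s : ℝ)))

/-- The multiscale penalized least-squares criterion
`Cr₀(Y, τ) = ‖Y - Π_τ Y‖² + L pen₀(τ, q)`. -/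
noncomputable def Cr0 (n : ℕ) (L q : ℝ) (Y : ℕ → ℝ) (S : Finset ℕ) : ℝ :=
  (∑ i ∈ Finset.Icc 1 n, (Y i - projCP n S Y i) ^ 2) + L * pen0 n q S

/-!
With a constant signal the residuals `Y - Ȳ` are the centred noise. Isolating a single
observation `j` in the middle of the sample (change-points `{j, j + 1}`) lowers the residual sum
of squares by at least `(Y j - Ȳ)²` and costs `L · pen₀ ≤ L (2 log n + O(1))`. Among the `≍ n`
middle observations, independence makes it overwhelmingly likely that one exceeds `a` and another
lies below `-a`, for `a ≈ √(2 L log n)`: each does so with probability `≳ n ^ (-e)`, `e < 1`,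
because `L < 1`. Being `2a` apart, one of the two is farther than `a` from `Ȳ`, whatever `Ȳ` is,
so the empty segmentation is not a minimiser.
-/

open Filter

lemma sum_sq_sub_segMean_le (Y : ℕ → ℝ) (a b : ℕ) (c : ℝ) :
    ∑ i ∈ Ico a b, (Y i - segMean Y a b) ^ 2 ≤ ∑ i ∈ Ico a b, (Y i - c) ^ 2 := by
  rcases le_or_gt b a with hba | hab
  · simp [Finset.Ico_eq_empty_of_le hba]
  set μ := segMean Y a b
  have hlen : ((b : ℝ) - a) ≠ 0 := sub_ne_zero.2 (by exact_mod_cast hab.ne')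
  have hcard : ((Ico a b).card : ℝ) = (b : ℝ) - a := by
    rw [Nat.card_Ico, Nat.cast_sub hab.le]
  have hsum : ∑ i ∈ Ico a b, Y i = ((Ico a b).card : ℝ) * μ := by
    rw [hcard]
    exact (mul_div_cancel₀ _ hlen).symm
  -- the cross term vanishes because the deviations from the mean sum to zero
  have hexpand : ∑ i ∈ Ico a b, (Y i - c) ^ 2
      = ∑ i ∈ Ico a b, (Y i - μ) ^ 2 + ((Ico a b).card : ℝ) * (μ - c) ^ 2 := by
    have hpt : ∀ i, (Y i - c) ^ 2 = (Y i - μ) ^ 2 + (2 * (μ - c) * Y i + (c ^ 2 - μ ^ 2)) :=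
      fun i => by ring
    simp only [hpt, sum_add_distrib, ← mul_sum, sum_const, nsmul_eq_mul, hsum]
    ring
  rw [hexpand, le_add_iff_nonneg_right]
  positivity

lemma prevPt_eq {S : Finset ℕ} {i p : ℕ} (hp : p ∈ insert 1 S) (hpi : p ≤ i)
    (hmax : ∀ s ∈ insert 1 S, s ≤ i → s ≤ p) : prevPt S i = p := by
  have hmem : p ∈ (insert 1 S).filter (· ≤ i) := mem_filter.2 ⟨hp, hpi⟩
  rw [prevPt, dif_pos ⟨p, hmem⟩]
  exact le_antisymm (max'_le _ _ _ fun s hs => hmax s (mem_filter.1 hs).1 (mem_filter.1 hs).2)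
    (le_max' _ _ hmem)

lemma nextPt_eq {n : ℕ} {S : Finset ℕ} {i p : ℕ} (hp : p ∈ insert (n + 1) S) (hip : i < p)
    (hmin : ∀ s ∈ insert (n + 1) S, i < s → p ≤ s) : nextPt n S i = p := by
  have hmem : p ∈ (insert (n + 1) S).filter (i < ·) := mem_filter.2 ⟨hp, hip⟩
  rw [nextPt, dif_pos ⟨p, hmem⟩]
  exact le_antisymm (min'_le _ _ hmem)
    (le_min' _ _ _ fun s hs => hmin s (mem_filter.1 hs).1 (mem_filter.1 hs).2)

lemma nextPt_empty {n i : ℕ} (hi : i ≤ n) : nextPt n ∅ i = n + 1 :=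
  nextPt_eq (by simp) (by omega) (by simp)

lemma projCP_empty {n i : ℕ} (Y : ℕ → ℝ) (hi : i ∈ Icc 1 n) :
    projCP n ∅ Y i = segMean Y 1 (n + 1) := by
  rw [mem_Icc] at hi
  rw [projCP, prevPt_eq (by simp) hi.1 (by simp), nextPt_empty hi.2]

section Pair

variable {n j : ℕ} (Y : ℕ → ℝ)

lemma projCP_pair_of_lt (hj : j ≤ n) {i : ℕ} (hi : i ∈ Ico 1 j) :
    projCP n {j, j + 1} Y i = segMean Y 1 j := by
  rw [mem_Ico] at hi
  rw [projCP, prevPt_eq (by simp) hi.1 (by simp; omega),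
    nextPt_eq (p := j) (by simp) hi.2 (by simp; omega)]

lemma projCP_pair_self : projCP n {j, j + 1} Y j = Y j := by
  rw [projCP, prevPt_eq (by simp) le_rfl (by simp),
    nextPt_eq (p := j + 1) (by simp) (by omega) (by simp), segMean]
  simp

lemma projCP_pair_of_gt {i : ℕ} (hi : i ∈ Ico (j + 1) (n + 1)) :
    projCP n {j, j + 1} Y i = segMean Y (j + 1) (n + 1) := by
  rw [mem_Ico] at hi
  rw [projCP, prevPt_eq (by simp) hi.1 (by simp),
    nextPt_eq (p := n + 1) (by simp) (by omega) (by simp; omega)]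

end Pair

lemma sum_Icc_eq_sum_Ico_add_add_sum_Ico {M : Type*} [AddCommMonoid M] (f : ℕ → M) {n j : ℕ}
    (hj : j ∈ Icc 1 n) :
    ∑ i ∈ Icc 1 n, f i = ∑ i ∈ Ico 1 j, f i + f j + ∑ i ∈ Ico (j + 1) (n + 1), f i := by
  rw [mem_Icc] at hj
  rw [← Ico_add_one_right_eq_Icc, ← sum_Ico_consecutive f hj.1 (by omega : j ≤ n + 1),
    sum_eq_sum_Ico_succ_bot (by omega : j < n + 1), add_assoc]

lemma rss_pair_add_sq_le_rss_empty {n j : ℕ} (Y : ℕ → ℝ) (hj : j ∈ Icc 1 n) :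
    ∑ i ∈ Icc 1 n, (Y i - projCP n {j, j + 1} Y i) ^ 2 + (Y j - segMean Y 1 (n + 1)) ^ 2
      ≤ ∑ i ∈ Icc 1 n, (Y i - projCP n ∅ Y i) ^ 2 := by
  set c := segMean Y 1 (n + 1)
  have hpair : ∑ i ∈ Icc 1 n, (Y i - projCP n {j, j + 1} Y i) ^ 2
      = ∑ i ∈ Ico 1 j, (Y i - segMean Y 1 j) ^ 2
        + ∑ i ∈ Ico (j + 1) (n + 1), (Y i - segMean Y (j + 1) (n + 1)) ^ 2 := by
    rw [sum_Icc_eq_sum_Ico_add_add_sum_Ico _ hj, projCP_pair_self, sub_self,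
      zero_pow two_ne_zero, add_zero]
    congr 1 <;> refine sum_congr rfl fun i hi => ?_
    · rw [projCP_pair_of_lt Y (mem_Icc.1 hj).2 hi]
    · rw [projCP_pair_of_gt Y hi]
  have hempty : ∑ i ∈ Icc 1 n, (Y i - projCP n ∅ Y i) ^ 2
      = ∑ i ∈ Ico 1 j, (Y i - c) ^ 2 + (Y j - c) ^ 2
        + ∑ i ∈ Ico (j + 1) (n + 1), (Y i - c) ^ 2 := by
    rw [sum_congr rfl fun i hi => by rw [projCP_empty Y hi],
      sum_Icc_eq_sum_Ico_add_add_sum_Ico _ hj]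
  have hleft := sum_sq_sub_segMean_le Y 1 j c
  have hright := sum_sq_sub_segMean_le Y (j + 1) (n + 1) c
  linarith

lemma pen0_empty {n : ℕ} (hn : 1 ≤ n) (q : ℝ) : pen0 n q ∅ = 0 := by
  have hn0 : (n : ℝ) ≠ 0 := by positivity
  simp [pen0, nextPt_empty hn, hn0]

lemma pen0_pair {n j : ℕ} (hj : 2 ≤ j) (hjn : j + 1 ≤ n) (q : ℝ) :
    pen0 n q {j, j + 1} = 2 * q + 2 * (log (n / (j - 1)) + log n + log (n / (n - j))) := by
  have h1 : 1 ∉ ({j, j + 1} : Finset ℕ) := by simp; omega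
  rw [pen0, card_pair (by omega), sum_insert h1, sum_pair (by omega),
    nextPt_eq (p := j) (by simp) (by omega) (by simp; omega),
    nextPt_eq (p := j + 1) (by simp) (by omega) (by simp),
    nextPt_eq (p := n + 1) (by simp) (by omega) (by simp)]
  push_cast
  ring_nf

lemma Cr0_pair_lt_Cr0_empty {n j : ℕ} {L q : ℝ} (Y : ℕ → ℝ) (hj : j ∈ Icc 1 n)
    (hpen : L * pen0 n q {j, j + 1} < (Y j - segMean Y 1 (n + 1)) ^ 2) :
    Cr0 n L q Y {j, j + 1} < Cr0 n L q Y ∅ := by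
  have hrss := rss_pair_add_sq_le_rss_empty Y hj
  rw [Cr0, Cr0, pen0_empty ((mem_Icc.1 hj).1.trans (mem_Icc.1 hj).2), mul_zero, add_zero]
  linarith

-- Isolating an index of this range costs only `2 log n + O(1)` in `pen₀`.
def middleIdx (n : ℕ) : Finset ℕ := Icc (n / 4 + 2) (n / 2)

lemma le_eight_mul_card_middleIdx {n : ℕ} (hn : 64 ≤ n) : n ≤ 8 * #(middleIdx n) := by
  rw [middleIdx, Nat.card_Icc]
  omega

lemma log_div_mem_Icc {x y : ℝ} (hy : 0 < y) (hyx : y ≤ x) (hxy : x ≤ 4 * y) :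
    log (x / y) ∈ Set.Icc 0 (log 4) := by
  have hxy' : x / y ≤ 4 := (div_le_iff₀ hy).2 (by linarith)
  exact ⟨log_nonneg ((one_le_div hy).2 hyx), log_le_log (div_pos (by linarith) hy) hxy'⟩

noncomputable def pairPenBound (n : ℕ) (q : ℝ) : ℝ := 2 * q + 2 * log n + 4 * log 4

lemma pairPenBound_nonneg (n : ℕ) {q : ℝ} (hq : 0 ≤ q) : 0 ≤ pairPenBound n q := by
  have := log_natCast_nonneg n
  have : 0 ≤ log (4 : ℝ) := log_nonneg (by norm_num)
  rw [pairPenBound]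
  positivity

lemma mul_pen0_pair_le {n j : ℕ} (hj : j ∈ middleIdx n) (L : ℝ) {q : ℝ} (hq : 0 ≤ q) :
    L * pen0 n q {j, j + 1} ≤ max L 0 * pairPenBound n q := by
  rw [middleIdx, mem_Icc] at hj
  have hj1 : (1 : ℝ) ≤ j - 1 := by
    have : (2 : ℝ) ≤ j := by exact_mod_cast (by omega : 2 ≤ j)
    linarith
  have hjn : (j : ℝ) + 1 ≤ n := by exact_mod_cast (by omega : j + 1 ≤ n)
  have hleft : (n : ℝ) + 4 ≤ 4 * j := by exact_mod_cast (by omega : n + 4 ≤ 4 * j)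
  have hright : (n : ℝ) + 4 * j ≤ 4 * n := by exact_mod_cast (by omega : n + 4 * j ≤ 4 * n)
  have hlog_n : 0 ≤ log n := log_natCast_nonneg n
  obtain ⟨hl0, hl4⟩ := log_div_mem_Icc (x := n) (y := j - 1) (by linarith) (by linarith)
    (by linarith)
  obtain ⟨hr0, hr4⟩ := log_div_mem_Icc (x := n) (y := n - j) (by linarith) (by linarith)
    (by linarith)
  rw [pen0_pair (by omega) (by omega), pairPenBound]
  exact mul_le_mul (le_max_left L 0) (by linarith) (by positivity) (le_max_right L 0)

lemma exists_abs_sub_gt_of_gap {y₁ y₂ a : ℝ} (c : ℝ) (hgap : 2 * a < y₁ - y₂) :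
    a < |y₁ - c| ∨ a < |y₂ - c| := by
  by_contra! h
  linarith [(abs_le.1 h.1).2, (abs_le.1 h.2).1]

lemma exists_Cr0_lt_Cr0_empty_of_gap {n j₁ j₂ : ℕ} {L q a : ℝ} {Y : ℕ → ℝ} (hq : 0 ≤ q)
    (hj₁ : j₁ ∈ middleIdx n) (hj₂ : j₂ ∈ middleIdx n) (ha : 0 ≤ a)
    (hpen : max L 0 * pairPenBound n q ≤ a ^ 2) (hgap : 2 * a < Y j₁ - Y j₂) :
    ∃ S ⊆ Icc 2 n, Cr0 n L q Y S < Cr0 n L q Y ∅ := by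
  obtain ⟨j, hj, hja⟩ : ∃ j ∈ middleIdx n, a < |Y j - segMean Y 1 (n + 1)| := by
    rcases exists_abs_sub_gt_of_gap (segMean Y 1 (n + 1)) hgap with h | h
    exacts [⟨j₁, hj₁, h⟩, ⟨j₂, hj₂, h⟩]
  have hjn : j ∈ Icc 2 (n - 1) := by
    rw [middleIdx, mem_Icc] at hj
    rw [mem_Icc]
    omega
  refine ⟨{j, j + 1}, ?_, Cr0_pair_lt_Cr0_empty Y ?_ ?_⟩
  · intro i hi
    simp only [mem_insert, mem_singleton, mem_Icc] at hi hjn ⊢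
    omega
  · simp only [mem_Icc] at hjn ⊢
    omega
  · calc L * pen0 n q {j, j + 1} ≤ a ^ 2 := (mul_pen0_pair_le hj L hq).trans hpen
      _ < (Y j - segMean Y 1 (n + 1)) ^ 2 := by
        rw [← sq_abs (Y j - _)]
        exact pow_lt_pow_left₀ hja ha two_ne_zero

lemma gaussianPDFReal_zero_one (x : ℝ) : gaussianPDFReal 0 1 x = exp (-x ^ 2 / 2) / √(2 * π) := by
  simp [gaussianPDFReal, div_eq_inv_mul]

lemma ofReal_gaussianPDFReal_mul_volume_le {s : Set ℝ} {c : ℝ} (hs : s ⊆ Set.Icc (-c) c) :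
    ENNReal.ofReal (gaussianPDFReal 0 1 c) * volume s ≤ gaussianReal 0 1 s := by
  rw [gaussianReal_apply 0 one_ne_zero, ← setLIntegral_const]
  refine setLIntegral_mono (measurable_gaussianPDF 0 1) fun x hx => ENNReal.ofReal_le_ofReal ?_
  have hxc : x ^ 2 ≤ c ^ 2 := sq_le_sq' (hs hx).1 (hs hx).2
  rw [gaussianPDFReal_zero_one, gaussianPDFReal_zero_one]
  gcongr

lemma gaussianReal_le_one_sub {s t : Set ℝ} {c : ℝ} (hs : MeasurableSet s) (hts : t ⊆ sᶜ)
    (htc : t ⊆ Set.Icc (-c) c) :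
    gaussianReal 0 1 s ≤ 1 - ENNReal.ofReal (gaussianPDFReal 0 1 c) * volume t := by
  rw [← compl_compl s, prob_compl_eq_one_sub hs.compl]
  exact tsub_le_tsub_left ((ofReal_gaussianPDFReal_mul_volume_le htc).trans (measure_mono hts)) 1

lemma gaussianReal_Iic_le {a : ℝ} (ha : 0 ≤ a) :
    gaussianReal 0 1 (Set.Iic a) ≤ 1 - ENNReal.ofReal (gaussianPDFReal 0 1 (a + 1)) := by
  simpa using gaussianReal_le_one_sub (t := Set.Ioc a (a + 1)) measurableSet_Iic
    (fun x hx => not_le.2 hx.1) (fun x hx => ⟨by linarith [hx.1], hx.2⟩)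

lemma gaussianReal_Ici_neg_le {a : ℝ} (ha : 0 ≤ a) :
    gaussianReal 0 1 (Set.Ici (-a)) ≤ 1 - ENNReal.ofReal (gaussianPDFReal 0 1 (a + 1)) := by
  simpa using gaussianReal_le_one_sub (t := Set.Ico (-(a + 1)) (-a)) measurableSet_Ici
    (fun x hx => not_le.2 hx.2) (fun x hx => ⟨hx.1, by linarith [hx.2]⟩)

section Probability

variable {Ω : Type} [MeasurableSpace Ω] {P : Measure Ω}

lemma ProbabilityTheory.iIndepFun.measure_biInter_preimage_le_exp {ι β : Type*}
    [MeasurableSpace β] {ε : ι → Ω → β} (hind : iIndepFun ε P) {s : Set β} (hs : MeasurableSet s)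
    {d : ℝ} (hd : 0 ≤ d) {J : Finset ι} (hJ : ∀ j ∈ J, P (ε j ⁻¹' s) ≤ 1 - ENNReal.ofReal d) :
    P (⋂ j ∈ J, ε j ⁻¹' s) ≤ ENNReal.ofReal (exp (-(d * #J))) := by
  have hexp : 1 - ENNReal.ofReal d ≤ ENNReal.ofReal (exp (-d)) := by
    rw [← ENNReal.ofReal_one, ← ENNReal.ofReal_sub 1 hd]
    exact ENNReal.ofReal_le_ofReal (by linarith [add_one_le_exp (-d)])
  rw [hind.measure_inter_preimage_eq_mul J fun _ _ => hs]
  calc ∏ j ∈ J, P (ε j ⁻¹' s) ≤ ∏ _j ∈ J, ENNReal.ofReal (exp (-d)) :=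
        prod_le_prod' fun j hj => (hJ j hj).trans hexp
    _ = ENNReal.ofReal (exp (-(d * #J))) := by
      rw [prod_const, ← ENNReal.ofReal_pow (exp_nonneg _), ← exp_nat_mul, mul_neg, mul_comm]

lemma measure_not_exists_gap_le {ε : ℕ → Ω → ℝ} (hε : IsStdGaussianNoise P ε) (J : Finset ℕ)
    {a : ℝ} (ha : 0 ≤ a) :
    P {ω | ¬ ∃ j₁ ∈ J, ∃ j₂ ∈ J, 2 * a < ε j₁ ω - ε j₂ ω}
      ≤ 2 * ENNReal.ofReal (exp (-(gaussianPDFReal 0 1 (a + 1) * #J))) := by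
  obtain ⟨hmeas, hind, hmap⟩ := hε
  have hpdf := gaussianPDFReal_nonneg 0 1 (a + 1)
  have hgauss : ∀ {s : Set ℝ}, MeasurableSet s →
      gaussianReal 0 1 s ≤ 1 - ENNReal.ofReal (gaussianPDFReal 0 1 (a + 1)) →
      P (⋂ j ∈ J, ε j ⁻¹' s) ≤ ENNReal.ofReal (exp (-(gaussianPDFReal 0 1 (a + 1) * #J))) :=
    fun hs hsd => hind.measure_biInter_preimage_le_exp hs hpdf fun j _ => by
      rwa [← Measure.map_apply (hmeas j) hs, hmap j]
  have hupper := hgauss measurableSet_Iic (gaussianReal_Iic_le ha)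
  have hlower := hgauss measurableSet_Ici (gaussianReal_Ici_neg_le ha)
  have hsub : {ω | ¬ ∃ j₁ ∈ J, ∃ j₂ ∈ J, 2 * a < ε j₁ ω - ε j₂ ω}
      ⊆ (⋂ j ∈ J, ε j ⁻¹' Set.Iic a) ∪ ⋂ j ∈ J, ε j ⁻¹' Set.Ici (-a) := by
    intro ω hω
    by_contra! h
    simp only [Set.mem_union, Set.mem_iInter, Set.mem_preimage, Set.mem_Iic, Set.mem_Ici,
      not_or, not_forall, not_le] at h
    obtain ⟨⟨j₁, hj₁, h₁⟩, ⟨j₂, hj₂, h₂⟩⟩ := h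
    exact hω ⟨j₁, hj₁, j₂, hj₂, by linarith⟩
  calc _ ≤ _ := measure_mono hsub
    _ ≤ _ := measure_union_le _ _
    _ ≤ _ := add_le_add hupper hlower
    _ = _ := (two_mul _).symm

lemma ofReal_one_sub_le_measure [IsProbabilityMeasure P] {s : Set Ω} {r : ℝ} (hr : 0 ≤ r)
    (hs : P sᶜ ≤ ENNReal.ofReal r) : ENNReal.ofReal (1 - r) ≤ P s := by
  have hcover : 1 ≤ P s + P sᶜ := by
    simpa [Set.union_compl_self] using measure_union_le (μ := P) s sᶜ
  rw [ENNReal.ofReal_sub 1 hr, ENNReal.ofReal_one, tsub_le_iff_right]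
  exact hcover.trans (by gcongr)

end Probability

lemma eventually_log_two_mul_le_mul_rpow {r c : ℝ} (hr : 0 < r) (hc : 0 < c) :
    ∀ᶠ x : ℝ in atTop, log (2 * x) ≤ c * x ^ r := by
  filter_upwards [(isLittleO_log_rpow_atTop hr).def (half_pos hc),
    (tendsto_rpow_atTop hr).eventually_ge_atTop (2 * log 2 / c), eventually_gt_atTop 0]
    with x hlog hlog2 hx
  rw [norm_eq_abs, norm_of_nonneg (rpow_nonneg hx.le r)] at hlog
  have h2 : log 2 ≤ c / 2 * x ^ r := by
    rw [div_le_iff₀ hc] at hlog2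
    linarith
  rw [log_mul two_ne_zero hx.ne']
  linarith [le_abs_self (log x)]

lemma add_one_sq_le {δ : ℝ} (hδ : 0 < δ) (a : ℝ) : (a + 1) ^ 2 ≤ (1 + δ) * a ^ 2 + (1 + δ⁻¹) := by
  have : 0 ≤ (δ * a - 1) ^ 2 / δ := by positivity
  have hδ' : δ ≠ 0 := hδ.ne'
  field_simp at this ⊢
  nlinarith

lemma exp_mul_exp_le_gaussianPDFReal_sqrt_add_one {δ b : ℝ} (hδ : 0 < δ) (hb : 0 ≤ b) :
    exp (-(1 + δ⁻¹) / 2) / √(2 * π) * exp (-((1 + δ) / 2 * b)) ≤ gaussianPDFReal 0 1 (√b + 1) := by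
  have hsq := add_one_sq_le hδ √b
  rw [sq_sqrt hb] at hsq
  rw [gaussianPDFReal_zero_one, div_mul_eq_mul_div, ← exp_add]
  gcongr
  linarith

lemma eventually_log_le_gaussianPDFReal_mul_card {ℓ q : ℝ} (hℓ0 : 0 ≤ ℓ) (hℓ1 : ℓ < 1)
    (hq : 0 ≤ q) :
    ∀ᶠ n : ℕ in atTop, 64 ≤ n ∧ log (2 * n) ≤
      gaussianPDFReal 0 1 (√(ℓ * pairPenBound n q) + 1) * #(middleIdx n) := by
  -- with `δ = 1 - ℓ` the exponent `e = (1 + δ) ℓ = 1 - (1 - ℓ)²` stays below `1`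
  set δ := 1 - ℓ
  set e := (1 + δ) * ℓ
  have hδ : 0 < δ := by simp only [δ]; linarith
  have he : 0 < 1 - e := by nlinarith
  set K := exp (-(1 + δ⁻¹) / 2) / √(2 * π) * exp (-((1 + δ) * ℓ * (q + 2 * log 4)))
  have hK : 0 < K := by positivity
  filter_upwards [tendsto_natCast_atTop_atTop.eventually
    (eventually_log_two_mul_le_mul_rpow he (div_pos hK (by norm_num : (0 : ℝ) < 8))),
    eventually_ge_atTop 64] with n hlog hn
  have hn0 : (0 : ℝ) < n := by exact_mod_cast (by omega : 0 < n)
  have hB : 0 ≤ ℓ * pairPenBound n q := mul_nonneg hℓ0 (pairPenBound_nonneg n hq)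
  have hpdf := exp_mul_exp_le_gaussianPDFReal_sqrt_add_one hδ hB
  have hrpow : K * (n : ℝ) ^ (-e) = exp (-(1 + δ⁻¹) / 2) / √(2 * π)
      * exp (-((1 + δ) / 2 * (ℓ * pairPenBound n q))) := by
    rw [rpow_def_of_pos hn0, mul_assoc, ← exp_add, pairPenBound]
    congr 2
    ring
  have hcard : (n : ℝ) ≤ 8 * #(middleIdx n) := by exact_mod_cast le_eight_mul_card_middleIdx hn
  refine ⟨hn, ?_⟩
  calc log (2 * n) ≤ K / 8 * (n : ℝ) ^ (1 - e) := hlog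
    _ = K * (n : ℝ) ^ (-e) * (n / 8) := by
      rw [sub_eq_add_neg, rpow_add hn0, rpow_one]
      ring
    _ ≤ _ := by
      rw [hrpow]
      exact mul_le_mul hpdf (by linarith) (by positivity) (gaussianPDFReal_nonneg _ _ _)

theorem penalized_ls_below_minimal_penalty_fails :
    ∀ L : ℝ, L < 1 → ∀ q : ℝ, 0 < q → ∃ n₀ : ℕ, ∀ n : ℕ, n₀ ≤ n →
    ∀ (Ω : Type) (_ : MeasurableSpace Ω) (P : Measure Ω), IsProbabilityMeasure P →
    ∀ ε : ℕ → Ω → ℝ, IsStdGaussianNoise P ε →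
    ∀ m : ℝ,
    ∀ Shat : Ω → Finset ℕ,
      (∀ ω, Shat ω ⊆ Finset.Icc 2 n ∧
        ∀ S ⊆ Finset.Icc 2 n,
          Cr0 n L q (fun i => m + ε i ω) (Shat ω) ≤ Cr0 n L q (fun i => m + ε i ω) S) →
      ENNReal.ofReal (1 - 1 / (n : ℝ)) ≤ P {ω | 1 ≤ (Shat ω).card} := by
  intro L hL q hq
  obtain ⟨n₀, hn₀⟩ := (eventually_log_le_gaussianPDFReal_mul_card (le_max_right L 0)
    (max_lt hL one_pos) hq.le).exists_forall_of_atTop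
  refine ⟨n₀, fun n hn Ω _ P _ ε hε m Shat hShat => ?_⟩
  obtain ⟨hn64, hlog⟩ := hn₀ n hn
  set a := √(max L 0 * pairPenBound n q)
  have hpen : max L 0 * pairPenBound n q ≤ a ^ 2 :=
    (sq_sqrt (mul_nonneg (le_max_right L 0) (pairPenBound_nonneg n hq.le))).ge
  have hsub : {ω | 1 ≤ #(Shat ω)}ᶜ
      ⊆ {ω | ¬ ∃ j₁ ∈ middleIdx n, ∃ j₂ ∈ middleIdx n, 2 * a < ε j₁ ω - ε j₂ ω} := by
    rintro ω hω ⟨j₁, hj₁, j₂, hj₂, hgap⟩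
    obtain ⟨S, hS, hlt⟩ := exists_Cr0_lt_Cr0_empty_of_gap (Y := fun i => m + ε i ω) hq.le hj₁ hj₂
      (sqrt_nonneg _) hpen (by linarith)
    have hempty : Shat ω = ∅ := by simpa using hω
    linarith [hempty ▸ (hShat ω).2 S hS]
  have hn0 : (0 : ℝ) < n := by exact_mod_cast (by omega : 0 < n)
  refine ofReal_one_sub_le_measure (by positivity) ?_
  calc P {ω | 1 ≤ #(Shat ω)}ᶜ
      ≤ 2 * ENNReal.ofReal (exp (-(gaussianPDFReal 0 1 (a + 1) * #(middleIdx n)))) :=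
        (measure_mono hsub).trans (measure_not_exists_gap_le hε _ (sqrt_nonneg _))
    _ ≤ 2 * ENNReal.ofReal (exp (-log (2 * n))) := by gcongr
    _ = ENNReal.ofReal (1 / n) := by
      rw [exp_neg, exp_log (by positivity), ← ENNReal.ofReal_ofNat 2,
        ← ENNReal.ofReal_mul zero_le_two]
      congr 1
      field_simp
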